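/- arXiv:2206.13822 — 3 statements merged into one kernel-verified Lean document; each statement's English description precedes it below -/
import Mathlib

section
/- Suppose additionally a₁ⱼ = 1 for all j. Then the set A_k = {x ∈ ℓ¹₊ : λ₁ + (‖λ‖ − λ₁)/(1 + ‖λ‖)^k ≤ ‖x‖ ≤ ‖λ‖} is invariant under F, i.e., F(A_k) ⊆ A_k. -/
/-!
Every row of weights lies in `[0, 1]`, so each ratio `(1 + ∑ⱼ aᵢⱼ xⱼ) / (1 + ‖x‖)` lies between
`(1 + ‖λ‖)⁻¹` and `1` as soon as `‖x‖ ≤ ‖λ‖`. Hence `λᵢ (1 + ‖λ‖)⁻ᵏ ≤ F(x)ᵢ ≤ λᵢ`, which gives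
positivity, summability and `‖F(x)‖ ≤ ‖λ‖`; since the first row of weights is all ones, `F(x)₁ = λ₁`
exactly, and bounding only the remaining coordinates from below gives the lower bound on `‖F(x)‖`.
-/

/-- The operator F, sequences indexed by ℕ with index 0 playing the paper's index 1. -/
noncomputable def Fop (k : ℕ) (l : ℕ → ℝ) (a : ℕ → ℕ → ℝ) (x : ℕ → ℝ) : ℕ → ℝ :=
  fun i => l i * ((1 + ∑' j, a i j * x j) / (1 + ∑' j, x j)) ^ k

open Set

theorem add_tsum_sub_mul_le_tsum {β : Type*} {f g : β → ℝ} {c : ℝ} (i₀ : β)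
    (hf : Summable f) (hg : Summable g) (hle : ∀ i ≠ i₀, c * g i ≤ f i) :
    f i₀ + (∑' i, g i - g i₀) * c ≤ ∑' i, f i := by
  have hgap : f i₀ - c * g i₀ ≤ ∑' i, (f i - c * g i) :=
    (hf.sub (hg.mul_left c)).le_tsum i₀ fun i hi => sub_nonneg.2 (hle i hi)
  rw [hf.tsum_sub (hg.mul_left c), hg.tsum_mul_left] at hgap
  linarith

section WeightedSum

variable {w x : ℕ → ℝ}

theorem summable_mul_of_mem_Icc (hw : ∀ j, w j ∈ Icc (0 : ℝ) 1) (hx : ∀ j, 0 ≤ x j)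
    (hxs : Summable x) : Summable fun j => w j * x j :=
  hxs.of_nonneg_of_le (fun j => mul_nonneg (hw j).1 (hx j))
    fun j => mul_le_of_le_one_left (hx j) (hw j).2

theorem tsum_mul_le_tsum_of_mem_Icc (hw : ∀ j, w j ∈ Icc (0 : ℝ) 1) (hx : ∀ j, 0 ≤ x j)
    (hxs : Summable x) : ∑' j, w j * x j ≤ ∑' j, x j :=
  (summable_mul_of_mem_Icc hw hx hxs).tsum_le_tsum
    (fun j => mul_le_of_le_one_left (hx j) (hw j).2) hxs

end WeightedSum

section Fop

variable {k : ℕ} {l : ℕ → ℝ} {a : ℕ → ℕ → ℝ} {x : ℕ → ℝ}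

theorem Fop_ratio_mem_Icc (ha : ∀ i j, a i j ∈ Icc (0 : ℝ) 1) (hx : ∀ j, 0 ≤ x j)
    (hxs : Summable x) {L : ℝ} (hxL : ∑' j, x j ≤ L) (i : ℕ) :
    (1 + ∑' j, a i j * x j) / (1 + ∑' j, x j) ∈ Icc (1 + L)⁻¹ 1 := by
  have hA : 0 ≤ ∑' j, a i j * x j := tsum_nonneg fun j => mul_nonneg (ha i j).1 (hx j)
  have hAS := tsum_mul_le_tsum_of_mem_Icc (ha i) hx hxs
  have hS : 0 < 1 + ∑' j, x j := by linarith
  refine ⟨?_, div_le_one_of_le₀ (by linarith) hS.le⟩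
  calc (1 + L)⁻¹ ≤ (1 + ∑' j, x j)⁻¹ := inv_anti₀ hS (by linarith)
    _ = 1 / (1 + ∑' j, x j) := (one_div _).symm
    _ ≤ (1 + ∑' j, a i j * x j) / (1 + ∑' j, x j) := by gcongr; linarith

theorem Fop_mem_Icc (ha : ∀ i j, a i j ∈ Icc (0 : ℝ) 1) (hx : ∀ j, 0 ≤ x j)
    (hxs : Summable x) {L : ℝ} (hxL : ∑' j, x j ≤ L) {i : ℕ} (hl : 0 ≤ l i) :
    Fop k l a x i ∈ Icc (l i * (1 + L)⁻¹ ^ k) (l i) := by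
  obtain ⟨hlow, hup⟩ := Fop_ratio_mem_Icc ha hx hxs hxL i
  have hL : 0 ≤ (1 + L)⁻¹ := by
    have : 0 ≤ ∑' j, x j := tsum_nonneg hx
    exact inv_nonneg.2 (by linarith)
  refine ⟨mul_le_mul_of_nonneg_left (pow_le_pow_left₀ hL hlow k) hl, ?_⟩
  exact mul_le_of_le_one_right hl (pow_le_one₀ (hL.trans hlow) hup)

theorem Fop_pos (ha : ∀ i j, a i j ∈ Icc (0 : ℝ) 1) (hx : ∀ j, 0 ≤ x j) {i : ℕ}
    (hl : 0 < l i) : 0 < Fop k l a x i := by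
  have hA : 0 ≤ ∑' j, a i j * x j := tsum_nonneg fun j => mul_nonneg (ha i j).1 (hx j)
  have hS : 0 ≤ ∑' j, x j := tsum_nonneg hx
  unfold Fop
  positivity

theorem Fop_eq_of_forall_eq_one (hx : ∀ j, 0 ≤ x j) {i : ℕ} (hai : ∀ j, a i j = 1) :
    Fop k l a x i = l i := by
  have hS : 1 + ∑' j, x j ≠ 0 := by
    have : 0 ≤ ∑' j, x j := tsum_nonneg hx
    positivity
  simp only [Fop, hai, one_mul, div_self hS, one_pow, mul_one]

end Fop

theorem stmt1_general (k : ℕ) (l : ℕ → ℝ) (a : ℕ → ℕ → ℝ)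
    (hl : ∀ i, 0 < l i) (hlsum : Summable l)
    (ha : ∀ i j, a i j = 0 ∨ a i j = 1) (ha1 : ∀ j, a 0 j = 1)
    (x : ℕ → ℝ) (hx : ∀ i, 0 < x i) (hxsum : Summable x)
    (hup : ∑' i, x i ≤ ∑' i, l i) :
    (∀ i, 0 < Fop k l a x i) ∧ Summable (Fop k l a x) ∧
      l 0 + (∑' i, l i - l 0) / (1 + ∑' i, l i) ^ k ≤ ∑' i, Fop k l a x i ∧
      ∑' i, Fop k l a x i ≤ ∑' i, l i := by
  have haI : ∀ i j, a i j ∈ Icc (0 : ℝ) 1 := fun i j => by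
    rcases ha i j with h | h <;> simp [h]
  have hx0 : ∀ j, 0 ≤ x j := fun j => (hx j).le
  have hF := fun i => Fop_mem_Icc (k := k) haI hx0 hxsum hup (hl i).le
  have hFsum : Summable (Fop k l a x) :=
    hlsum.of_nonneg_of_le (fun i => (Fop_pos haI hx0 (hl i)).le) fun i => (hF i).2
  refine ⟨fun i => Fop_pos haI hx0 (hl i), hFsum, ?_,
    hFsum.tsum_le_tsum (fun i => (hF i).2) hlsum⟩
  have hlow := add_tsum_sub_mul_le_tsum 0 hFsum hlsum fun i _ => by
    rw [mul_comm]; exact (hF i).1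
  rwa [Fop_eq_of_forall_eq_one hx0 ha1, inv_pow, ← div_eq_mul_inv] at hlow

/-- if a₁ⱼ = 1 for all j, then
A_k = {x ∈ ℓ¹₊ : λ₁ + (‖λ‖-λ₁)/(1+‖λ‖)^k ≤ ‖x‖ ≤ ‖λ‖} is invariant under F. -/
theorem stmt1 (k : ℕ) (hk : 1 ≤ k) (l : ℕ → ℝ) (a : ℕ → ℕ → ℝ)
    (hl : ∀ i, 0 < l i) (hlsum : Summable l)
    (ha : ∀ i j, a i j = 0 ∨ a i j = 1) (ha1 : ∀ j, a 0 j = 1)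
    (x : ℕ → ℝ) (hx : ∀ i, 0 < x i) (hxsum : Summable x)
    (hlow : l 0 + (∑' i, l i - l 0) / (1 + ∑' i, l i) ^ k ≤ ∑' i, x i)
    (hup : ∑' i, x i ≤ ∑' i, l i) :
    (∀ i, 0 < Fop k l a x i) ∧ Summable (Fop k l a x) ∧
      l 0 + (∑' i, l i - l 0) / (1 + ∑' i, l i) ^ k ≤ ∑' i, Fop k l a x i ∧
      ∑' i, Fop k l a x i ≤ ∑' i, l i :=
  stmt1_general k l a hl hlsum ha ha1 x hx hxsum hup
end

section
/- For i ≥ 1 and x, y with x₁ = y₁ = λ₁, the coordinatewise difference satisfies |Fᵢ(x) − Fᵢ(y)| ≤ k·λᵢ·(1 + 2‖x‖)/((1 + ‖x‖)(1 + ‖y‖)) · ‖x − y‖₁. -/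
lemma aux_pow_lip (k : ℕ) {u v : ℝ} (hu0 : 0 ≤ u) (hu1 : u ≤ 1) (hv0 : 0 ≤ v)
    (hv1 : v ≤ 1) : |u ^ k - v ^ k| ≤ k * |u - v| := by
  induction k with
  | zero => simp
  | succ n ih =>
    have h : u ^ (n + 1) - v ^ (n + 1) = u * (u ^ n - v ^ n) + v ^ n * (u - v) := by ring
    calc |u ^ (n + 1) - v ^ (n + 1)| ≤ |u * (u ^ n - v ^ n)| + |v ^ n * (u - v)| := by
            rw [h]; exact abs_add_le _ _
      _ = |u| * |u ^ n - v ^ n| + |v ^ n| * |u - v| := by rw [abs_mul, abs_mul]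
      _ ≤ 1 * (n * |u - v|) + 1 * |u - v| := by
            gcongr
            · exact abs_le.2 ⟨by linarith, hu1⟩
            · exact abs_le.2 ⟨by nlinarith [pow_nonneg hv0 n], pow_le_one₀ hv0 hv1⟩
      _ = (n + 1 : ℕ) * |u - v| := by push_cast; ring

lemma abs_tsum_le' {f : ℕ → ℝ} (hf : Summable fun j => |f j|) :
    |∑' j, f j| ≤ ∑' j, |f j| := by
  simpa only [Real.norm_eq_abs] using
    norm_tsum_le_tsum_norm (f := f) (by simpa only [Real.norm_eq_abs] using hf)

/-- coordinatewise estimate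
|Fᵢ(x) − Fᵢ(y)| ≤ k λᵢ (1 + 2‖x‖)/((1+‖x‖)(1+‖y‖)) · ‖x−y‖₁
for x, y ∈ ℓ¹₊ with x₁ = y₁ = λ₁. -/
theorem stmt6 (k : ℕ) (hk : 1 ≤ k) (l : ℕ → ℝ) (a : ℕ → ℕ → ℝ)
    (hl : ∀ i, 0 < l i) (hlsum : Summable l)
    (ha : ∀ i j, a i j = 0 ∨ a i j = 1) (ha1 : ∀ j, a 0 j = 1)
    (x y : ℕ → ℝ) (hx : ∀ i, 0 < x i) (hxsum : Summable x)
    (hy : ∀ i, 0 < y i) (hysum : Summable y)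
    (hx0 : x 0 = l 0) (hy0 : y 0 = l 0) (i : ℕ) :
    |Fop k l a x i - Fop k l a y i| ≤
      k * l i * (1 + 2 * ∑' j, x j) / ((1 + ∑' j, x j) * (1 + ∑' j, y j)) *
        ∑' j, |x j - y j| := by
  have haij : ∀ j, 0 ≤ a i j ∧ a i j ≤ 1 := fun j => by
    rcases ha i j with h | h <;> simp [h]
  -- summability facts
  have hax : Summable (fun j => a i j * x j) :=
    Summable.of_nonneg_of_le (fun j => mul_nonneg (haij j).1 (hx j).le)
      (fun j => mul_le_of_le_one_left (hx j).le (haij j).2) hxsum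
  have hay : Summable (fun j => a i j * y j) :=
    Summable.of_nonneg_of_le (fun j => mul_nonneg (haij j).1 (hy j).le)
      (fun j => mul_le_of_le_one_left (hy j).le (haij j).2) hysum
  have hd : Summable (fun j => |x j - y j|) := (hxsum.sub hysum).abs
  have hPsum : Summable (fun j => a i j * |x j - y j|) :=
    Summable.of_nonneg_of_le (fun j => mul_nonneg (haij j).1 (abs_nonneg _))
      (fun j => mul_le_of_le_one_left (abs_nonneg _) (haij j).2) hd
  have hQsum : Summable (fun j => (1 - a i j) * |x j - y j|) :=
    Summable.of_nonneg_of_le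
      (fun j => mul_nonneg (by linarith [(haij j).2]) (abs_nonneg _))
      (fun j => mul_le_of_le_one_left (abs_nonneg _) (by linarith [(haij j).1])) hd
  set Sx := ∑' j, x j with hSx
  set Sy := ∑' j, y j with hSy
  set Ax := ∑' j, a i j * x j with hAx
  set Ay := ∑' j, a i j * y j with hAy
  set D := ∑' j, |x j - y j| with hD
  have hSx0 : 0 ≤ Sx := tsum_nonneg fun j => (hx j).le
  have hSy0 : 0 ≤ Sy := tsum_nonneg fun j => (hy j).le
  have hAx0 : 0 ≤ Ax := tsum_nonneg fun j => mul_nonneg (haij j).1 (hx j).le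
  have hAy0 : 0 ≤ Ay := tsum_nonneg fun j => mul_nonneg (haij j).1 (hy j).le
  have hAxS : Ax ≤ Sx :=
    Summable.tsum_le_tsum (fun j => mul_le_of_le_one_left (hx j).le (haij j).2) hax hxsum
  have hAyS : Ay ≤ Sy :=
    Summable.tsum_le_tsum (fun j => mul_le_of_le_one_left (hy j).le (haij j).2) hay hysum
  have hD0 : 0 ≤ D := tsum_nonneg fun j => abs_nonneg _
  have hdx : (0:ℝ) < 1 + Sx := by linarith
  have hdy : (0:ℝ) < 1 + Sy := by linarith
  -- δA and δQ
  have hsubA : Summable (fun j => a i j * (x j - y j)) := by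
    simp only [mul_sub]; exact hax.sub hay
  have hsubS : Summable (fun j => x j - y j) := hxsum.sub hysum
  have hδA : Ax - Ay = ∑' j, a i j * (x j - y j) := by
    simp only [mul_sub]; rw [Summable.tsum_sub hax hay]
  have hδQ : (Sx - Sy) - (Ax - Ay) = ∑' j, (1 - a i j) * (x j - y j) := by
    rw [hδA, ← Summable.tsum_sub hxsum hysum, ← Summable.tsum_sub hsubS hsubA]
    congr 1; ext j; ring
  -- bounds on δA, δQ
  have habsA : |Ax - Ay| ≤ ∑' j, a i j * |x j - y j| := by
    rw [hδA]
    calc |∑' j, a i j * (x j - y j)| ≤ ∑' j, |a i j * (x j - y j)| :=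
          abs_tsum_le' hsubA.abs
      _ = ∑' j, a i j * |x j - y j| := tsum_congr fun j => by
          rw [abs_mul, abs_of_nonneg (haij j).1]
  have habsQ : |(Sx - Sy) - (Ax - Ay)| ≤ ∑' j, (1 - a i j) * |x j - y j| := by
    rw [hδQ]
    have hs : Summable (fun j => (1 - a i j) * (x j - y j)) := by
      simp only [sub_mul, one_mul]; exact hsubS.sub hsubA
    calc |∑' j, (1 - a i j) * (x j - y j)| ≤ ∑' j, |(1 - a i j) * (x j - y j)| :=
          abs_tsum_le' hs.abs
      _ = ∑' j, (1 - a i j) * |x j - y j| := tsum_congr fun j => by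
          rw [abs_mul, abs_of_nonneg (by linarith [(haij j).2])]
  have hPQ : (∑' j, a i j * |x j - y j|) + (∑' j, (1 - a i j) * |x j - y j|) = D := by
    rw [← Summable.tsum_add hPsum hQsum]
    congr 1; ext j; ring
  -- numerator bound
  set N := (1 + Ax) * (1 + Sy) - (1 + Ay) * (1 + Sx) with hN
  have hNval : N = (Ax - Ay) * (Sx - Ax) - ((Sx - Sy) - (Ax - Ay)) * (1 + Ax) := by
    rw [hN]; ring
  have hNbound : |N| ≤ (1 + Sx) * D := by
    have hP0 : 0 ≤ ∑' j, a i j * |x j - y j| :=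
      tsum_nonneg fun j => mul_nonneg (haij j).1 (abs_nonneg _)
    have hQ0 : 0 ≤ ∑' j, (1 - a i j) * |x j - y j| :=
      tsum_nonneg fun j => mul_nonneg (by linarith [(haij j).2]) (abs_nonneg _)
    have h1 : |Ax - Ay| * |Sx - Ax| ≤ (∑' j, a i j * |x j - y j|) * (1 + Sx) :=
      mul_le_mul habsA (by rw [abs_le]; constructor <;> linarith) (abs_nonneg _) hP0
    have h2 : |(Sx - Sy) - (Ax - Ay)| * |1 + Ax|
        ≤ (∑' j, (1 - a i j) * |x j - y j|) * (1 + Sx) :=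
      mul_le_mul habsQ (by rw [abs_le]; constructor <;> linarith) (abs_nonneg _) hQ0
    calc |N| = |(Ax - Ay) * (Sx - Ax) - ((Sx - Sy) - (Ax - Ay)) * (1 + Ax)| := by
          rw [hNval]
      _ ≤ |Ax - Ay| * |Sx - Ax| + |(Sx - Sy) - (Ax - Ay)| * |1 + Ax| := by
          refine (abs_sub _ _).trans ?_; rw [abs_mul, abs_mul]
      _ ≤ (∑' j, a i j * |x j - y j|) * (1 + Sx)
            + (∑' j, (1 - a i j) * |x j - y j|) * (1 + Sx) := add_le_add h1 h2
      _ = (1 + Sx) * D := by rw [← hPQ]; ring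
  -- u and v
  set u := (1 + Ax) / (1 + Sx) with hu
  set v := (1 + Ay) / (1 + Sy) with hv
  have hu0 : 0 ≤ u := div_nonneg (by linarith) hdx.le
  have hu1 : u ≤ 1 := (div_le_one hdx).2 (by linarith)
  have hv0 : 0 ≤ v := div_nonneg (by linarith) hdy.le
  have hv1 : v ≤ 1 := (div_le_one hdy).2 (by linarith)
  have huv : u - v = N / ((1 + Sx) * (1 + Sy)) := by
    rw [hu, hv, hN]; field_simp
  have habsuv : |u - v| ≤ (1 + 2 * Sx) * D / ((1 + Sx) * (1 + Sy)) := by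
    have hden := mul_pos hdx hdy
    rw [huv, abs_div, abs_of_pos hden, div_le_div_iff₀ hden hden]
    have h1 : |N| ≤ (1 + 2 * Sx) * D := hNbound.trans (by nlinarith [mul_nonneg hSx0 hD0])
    exact mul_le_mul_of_nonneg_right h1 hden.le
  have hF : Fop k l a x i - Fop k l a y i = l i * (u ^ k - v ^ k) := by
    simp only [Fop, hu, hv, hAx, hAy, hSx, hSy]; ring
  calc |Fop k l a x i - Fop k l a y i| = l i * |u ^ k - v ^ k| := by
        rw [hF, abs_mul, abs_of_pos (hl i)]
    _ ≤ l i * (k * |u - v|) :=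
        mul_le_mul_of_nonneg_left (aux_pow_lip k hu0 hu1 hv0 hv1) (hl i).le
    _ ≤ l i * (k * ((1 + 2 * Sx) * D / ((1 + Sx) * (1 + Sy)))) :=
        mul_le_mul_of_nonneg_left
          (mul_le_mul_of_nonneg_left habsuv (Nat.cast_nonneg k)) (hl i).le
    _ = k * l i * (1 + 2 * Sx) / ((1 + Sx) * (1 + Sy)) * D := by
        field_simp
end

section
/- Let k = 2, a₁ⱼ = 1 for all j, aᵢ₁ = 1 for all i, and all other aᵢⱼ = 0. Then the operator F (given by x′₁ = λ₁, x′ᵢ = λᵢ((1+λ₁)/(1+‖x‖))² for i ≥ 2) has exactly one fixed point in ℓ¹₊. -/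
/-! The operator `Fex l` depends on `x` only through `s = ∑' x`, and its value is `l` with the
tail scaled by `((1 + l 0) / (1 + s))²`. So `x` is a fixed point iff `x` is this profile for
some `s` that is a fixed point of the scalar map `s ↦ l 0 + (∑ᵢ l (i+1)) ((1 + l 0) / (1 + s))²`.
That map is continuous, nonnegative and antitone on `[0, ∞)`, hence has exactly one fixed point. -/

open Set

/-- The operator of example 2 (k = 2, a₁ⱼ = aᵢ₁ = 1, other aᵢⱼ = 0):
x′₁ = λ₁ and x′ᵢ = λᵢ((1+λ₁)/(1+‖x‖))² for i ≥ 2.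
Index 0 plays the paper's index 1. -/
noncomputable def Fex (l : ℕ → ℝ) (x : ℕ → ℝ) : ℕ → ℝ :=
  fun i => if i = 0 then l 0 else l i * ((1 + l 0) / (1 + ∑' j, x j)) ^ 2

noncomputable def Fex.ofNorm (l : ℕ → ℝ) (s : ℝ) : ℕ → ℝ :=
  fun i => if i = 0 then l 0 else l i * ((1 + l 0) / (1 + s)) ^ 2

noncomputable def Fex.normMap (l : ℕ → ℝ) (s : ℝ) : ℝ :=
  l 0 + (∑' i, l (i + 1)) * ((1 + l 0) / (1 + s)) ^ 2

theorem existsUnique_nonneg_fixedPoint_of_antitoneOn {φ : ℝ → ℝ}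
    (hcont : ContinuousOn φ (Ici 0)) (hanti : AntitoneOn φ (Ici 0)) (h0 : 0 ≤ φ 0) :
    ∃! t, 0 ≤ t ∧ φ t = t := by
  refine existsUnique_of_exists_of_unique ?_ ?_
  · -- `φ t - t` changes sign on `[0, φ 0]`
    have hφφ0 : φ (φ 0) ≤ φ 0 := hanti self_mem_Ici h0 h0
    obtain ⟨t, ht, hφt⟩ := intermediate_value_Icc' h0
      ((hcont.mono Icc_subset_Ici_self).sub continuousOn_id)
      (show (0 : ℝ) ∈ Icc (φ (φ 0) - φ 0) (φ 0 - 0) by constructor <;> linarith)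
    exact ⟨t, ht.1, sub_eq_zero.mp hφt⟩
  · rintro s t ⟨hs, hφs⟩ ⟨ht, hφt⟩
    rcases le_total s t with hst | hts
    · exact le_antisymm hst (hφt ▸ hφs ▸ hanti hs ht hst)
    · exact le_antisymm (hφs ▸ hφt ▸ hanti ht hs hts) hts

namespace Fex

variable {l : ℕ → ℝ}

theorem eq_ofNorm (l x : ℕ → ℝ) : Fex l x = ofNorm l (∑' j, x j) := rfl

theorem ofNorm_pos (hl : ∀ i, 0 < l i) {s : ℝ} (hs : 0 ≤ s) (i : ℕ) : 0 < ofNorm l s i := by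
  have h0 := hl 0
  unfold ofNorm
  split_ifs
  · exact hl 0
  · exact mul_pos (hl i) (by positivity)

theorem ofNorm_succ (l : ℕ → ℝ) (s : ℝ) (i : ℕ) :
    ofNorm l s (i + 1) = ((1 + l 0) / (1 + s)) ^ 2 * l (i + 1) :=
  mul_comm _ _

theorem summable_ofNorm (hl : Summable l) (s : ℝ) : Summable (ofNorm l s) := by
  rw [← summable_nat_add_iff 1]
  simpa only [ofNorm_succ] using ((summable_nat_add_iff 1).mpr hl).mul_left _

theorem tsum_ofNorm (hl : Summable l) (s : ℝ) : ∑' i, ofNorm l s i = normMap l s := by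
  rw [(summable_ofNorm hl s).tsum_eq_zero_add, tsum_congr (ofNorm_succ l s), tsum_mul_left,
    normMap, mul_comm]
  rfl

theorem normMap_nonneg (hl : ∀ i, 0 ≤ l i) (s : ℝ) : 0 ≤ normMap l s :=
  add_nonneg (hl 0) (mul_nonneg (tsum_nonneg fun i => hl (i + 1)) (sq_nonneg _))

theorem continuousOn_normMap (l : ℕ → ℝ) : ContinuousOn (normMap l) (Ici 0) :=
  continuousOn_of_forall_continuousAt fun s (hs : 0 ≤ s) => by
    have : 1 + s ≠ 0 := by positivity
    unfold normMap
    fun_prop (disch := assumption)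

theorem antitoneOn_normMap (hl : ∀ i, 0 ≤ l i) : AntitoneOn (normMap l) (Ici 0) := by
  intro s (hs : 0 ≤ s) t (ht : 0 ≤ t) hst
  have := hl 0
  have : 0 ≤ ∑' i, l (i + 1) := tsum_nonneg fun i => hl (i + 1)
  unfold normMap
  gcongr

theorem existsUnique_fixedPoint_normMap (hl : ∀ i, 0 ≤ l i) : ∃! t, normMap l t = t := by
  obtain ⟨t, ⟨-, ht⟩, huniq⟩ := existsUnique_nonneg_fixedPoint_of_antitoneOn
    (continuousOn_normMap l) (antitoneOn_normMap hl) (normMap_nonneg hl 0)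
  exact ⟨t, ht, fun s hs => huniq s ⟨hs ▸ normMap_nonneg hl s, hs⟩⟩

theorem eq_self_iff (hl : Summable l) {x : ℕ → ℝ} :
    Fex l x = x ↔ ∃ t, normMap l t = t ∧ x = ofNorm l t := by
  constructor
  · intro hx
    refine ⟨∑' j, x j, ?_, hx.symm⟩
    rw [← tsum_ofNorm hl, ← eq_ofNorm, hx]
  · rintro ⟨t, ht, rfl⟩
    rw [eq_ofNorm, tsum_ofNorm hl, ht]

end Fex

theorem stmt10_general (l : ℕ → ℝ) (hl : ∀ i, 0 < l i) (hlsum : Summable l) :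
    ∃! x : ℕ → ℝ, ((∀ i, 0 < x i) ∧ Summable x) ∧ Fex l x = x := by
  have hl' : ∀ i, 0 ≤ l i := fun i => (hl i).le
  obtain ⟨t, ht, huniq⟩ := Fex.existsUnique_fixedPoint_normMap hl'
  have ht0 : 0 ≤ t := ht ▸ Fex.normMap_nonneg hl' t
  refine ⟨Fex.ofNorm l t, ⟨⟨Fex.ofNorm_pos hl ht0, Fex.summable_ofNorm hlsum t⟩,
    (Fex.eq_self_iff hlsum).mpr ⟨t, ht, rfl⟩⟩, ?_⟩
  rintro y ⟨-, hy⟩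
  obtain ⟨s, hs, rfl⟩ := (Fex.eq_self_iff hlsum).mp hy
  rw [huniq s hs]

/-- this operator has exactly one fixed point in ℓ¹₊. -/
theorem stmt10 (l : ℕ → ℝ) (hl : ∀ i, 0 < l i) (hlsum : Summable l)
    (hnorm : l 0 < ∑' i, l i) :
    ∃! x : ℕ → ℝ, ((∀ i, 0 < x i) ∧ Summable x) ∧ Fex l x = x :=
  stmt10_general l hl hlsum
end
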